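/- Let A be an additive category, X a locally finite simplicial complex, and C a finite chain complex in A*(X). Then C is chain contractible in A*(X) if and only if for every simplex σ of X, the diagonal chain complex C(σ) is chain contractible in A. -/

import Mathlib

open CategoryTheory

attribute [local instance] Classical.propDecidable

/-- A finite chain complex in the simplicially graded additive category `A*(X)`. -/
structure GCx (X : Type) [PartialOrder X] [∀ ρ σ : X, Fintype {τ : X // ρ ≤ τ ∧ τ ≤ σ}]
    (A : Type) [Category A] [Preadditive A] where
  ob : ℤ → X → A
  d : ∀ (i j : ℤ) (σ τ : X), ob i σ ⟶ ob j τ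
  shape : ∀ (i j : ℤ) (σ τ : X), ¬(τ ≤ σ ∧ j = i - 1) → d i j σ τ = 0
  dsq : ∀ (i : ℤ) (σ ρ : X),
    (∑ τ : {τ : X // ρ ≤ τ ∧ τ ≤ σ}, d i (i - 1) σ τ.1 ≫ d (i - 1) (i - 1 - 1) τ.1 ρ) = 0
  bounded : ∃ N : ℕ, ∀ (i : ℤ) (σ : X), (N : ℤ) < |i| → Limits.IsZero (ob i σ)

variable {X : Type} [PartialOrder X] [∀ ρ σ : X, Fintype {τ : X // ρ ≤ τ ∧ τ ≤ σ}]
variable {A : Type} [Category A] [Preadditive A]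

/-- A chain contraction in `A` of the diagonal (local) chain complex `C(σ)`. -/
structure LocalContraction (C : GCx X A) (σ : X) where
  P : ∀ i j : ℤ, C.ob i σ ⟶ C.ob j σ
  shape : ∀ i j : ℤ, j ≠ i + 1 → P i j = 0
  contr : ∀ i : ℤ,
    C.d i (i - 1) σ σ ≫ P (i - 1) i + P i (i + 1) ≫ C.d (i + 1) i σ σ = 𝟙 (C.ob i σ)

/-- A chain contraction of `C` in `A*(X)`: a degree `+1` morphism of `A*(X)`
(components supported on `τ ≤ σ`) with `dP + Pd = id`. -/
structure GlobalContraction (C : GCx X A) where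
  P : ∀ (i j : ℤ) (σ τ : X), C.ob i σ ⟶ C.ob j τ
  shape : ∀ (i j : ℤ) (σ τ : X), ¬(τ ≤ σ ∧ j = i + 1) → P i j σ τ = 0
  contr : ∀ (i : ℤ) (σ ρ : X),
    (∑ τ : {τ : X // ρ ≤ τ ∧ τ ≤ σ}, C.d i (i - 1) σ τ.1 ≫ P (i - 1) i τ.1 ρ)
      + (∑ τ : {τ : X // ρ ≤ τ ∧ τ ≤ σ}, P i (i + 1) σ τ.1 ≫ C.d (i + 1) i τ.1 ρ)
    = if h : ρ = σ then eqToHom (by rw [h]) else 0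

/-!
Restricting a contraction of `C` to the diagonal gives contractions of the `C(σ)`. Conversely,
put local contractions `P_σ` on the diagonal of a degree-one map `P`. Then `dP + Pd` is
unitriangular: it is the identity on the diagonal and supported on `τ ≤ σ`. As the intervals of
`X` are finite, a unitriangular matrix has a right inverse `Q`, built by recursion on the size of
the interval, and is left cancellable. Since `dP + Pd` commutes with `d`, so does `Q`, and `PQ` is
a contraction: `d (PQ) + (PQ) d = (dP + Pd) Q = 1`.
-/

abbrev Itv (ρ σ : X) : Type := {τ : X // ρ ≤ τ ∧ τ ≤ σ}

namespace Itv

abbrev top {ρ σ : X} (h : ρ ≤ σ) : Itv ρ σ := ⟨σ, h, le_rfl⟩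

theorem card_lt_card {ρ τ σ : X} (hρτ : ρ ≤ τ) (hτσ : τ < σ) :
    Fintype.card (Itv ρ τ) < Fintype.card (Itv ρ σ) := by
  refine Fintype.card_lt_of_injective_of_notMem (fun μ => ⟨μ.1, μ.2.1, μ.2.2.trans hτσ.le⟩)
    (fun _ _ h => Subtype.ext (Subtype.mk.inj h)) (b := top (hρτ.trans hτσ.le)) ?_
  rintro ⟨μ, hμ⟩
  have hμσ : μ.1 = σ := congrArg Subtype.val hμ
  exact hτσ.not_ge (hμσ ▸ μ.2.2)

variable {M : Type*} [AddCommMonoid M]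

theorem sum_self (σ : X) (f : Itv σ σ → M) : ∑ τ, f τ = f (top le_rfl) :=
  Fintype.sum_eq_single _ fun τ hτ => absurd (Subtype.ext (le_antisymm τ.2.2 τ.2.1)) hτ

theorem sum_eq_zero_of_not_le {ρ σ : X} (h : ¬ρ ≤ σ) (f : Itv ρ σ → M) : ∑ τ, f τ = 0 :=
  have : IsEmpty (Itv ρ σ) := ⟨fun τ => h (τ.2.1.trans τ.2.2)⟩
  Fintype.sum_empty f

theorem sum_eq_add_sum_ne_top {ρ σ : X} (h : ρ ≤ σ) (f : Itv ρ σ → M) :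
    ∑ τ, f τ = f (top h) + ∑ τ, if τ.1 = σ then 0 else f τ := by
  have hσ : ∀ τ : Itv ρ σ, τ.1 = σ ↔ τ = top h := fun τ =>
    ⟨fun h' => Subtype.ext h', congrArg Subtype.val⟩
  rw [Fintype.sum_eq_add_sum_compl (top h), Finset.sum_ite, Finset.sum_const_zero, zero_add]
  congr 2
  ext τ
  simp [hσ]

theorem sum_sum_comm (ρ σ : X) (f : X → X → M) :
    ∑ τ : Itv ρ σ, ∑ μ : Itv τ.1 σ, f μ.1 τ.1 = ∑ μ : Itv ρ σ, ∑ τ : Itv ρ μ.1, f μ.1 τ.1 := by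
  let e : (Σ τ : Itv ρ σ, Itv τ.1 σ) ≃ (Σ μ : Itv ρ σ, Itv ρ μ.1) :=
    { toFun := fun x => ⟨⟨x.2.1, x.1.2.1.trans x.2.2.1, x.2.2.2⟩, ⟨x.1.1, x.1.2.1, x.2.2.1⟩⟩
      invFun := fun y => ⟨⟨y.2.1, y.2.2.1, y.2.2.2.trans y.1.2.2⟩, ⟨y.1.1, y.2.2.2, y.1.2.2⟩⟩ }
  calc _ = ∑ x : Σ τ : Itv ρ σ, Itv τ.1 σ, f x.2.1 x.1.1 := (Fintype.sum_sigma _).symm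
    _ = ∑ y : Σ μ : Itv ρ σ, Itv ρ μ.1, f y.1.1 y.2.1 := Fintype.sum_equiv e _ _ fun _ => rfl
    _ = _ := Fintype.sum_sigma _

end Itv

-- The morphisms of `A*(X)` are the triangular matrices, and on them the product below, which
-- sums only over `[ρ, σ]`, is their composition.
def GradedMat (a b : X → A) : Type _ := ∀ σ τ : X, a σ ⟶ b τ

namespace GradedMat

variable {a b c e : X → A}

instance : AddCommGroup (GradedMat a b) := inferInstanceAs (AddCommGroup (∀ σ τ, a σ ⟶ b τ))

@[ext]
theorem ext {M N : GradedMat a b} (h : ∀ σ τ, M σ τ = N σ τ) : M = N := funext fun σ => funext (h σ)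

theorem zero_apply (σ τ : X) : (0 : GradedMat a b) σ τ = 0 := rfl

theorem add_apply (M N : GradedMat a b) (σ τ : X) : (M + N) σ τ = M σ τ + N σ τ := rfl

theorem sub_apply (M N : GradedMat a b) (σ τ : X) : (M - N) σ τ = M σ τ - N σ τ := rfl

instance : HMul (GradedMat a b) (GradedMat b c) (GradedMat a c) where
  hMul M N σ ρ := ∑ τ : Itv ρ σ, M σ τ.1 ≫ N τ.1 ρ

noncomputable instance : One (GradedMat a a) where
  one σ τ := if h : τ = σ then eqToHom (by rw [h]) else 0

theorem mul_apply (M : GradedMat a b) (N : GradedMat b c) (σ ρ : X) :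
    (M * N) σ ρ = ∑ τ : Itv ρ σ, M σ τ.1 ≫ N τ.1 ρ := rfl

theorem one_apply_self (σ : X) : (1 : GradedMat a a) σ σ = 𝟙 (a σ) := dif_pos rfl

theorem one_apply_of_ne {σ τ : X} (h : τ ≠ σ) : (1 : GradedMat a a) σ τ = 0 := dif_neg h

def Triangular (M : GradedMat a b) : Prop := ∀ σ τ : X, ¬τ ≤ σ → M σ τ = 0

theorem triangular_mul (M : GradedMat a b) (N : GradedMat b c) : (M * N).Triangular :=
  fun _ _ h => Itv.sum_eq_zero_of_not_le h _

theorem Triangular.sub {M N : GradedMat a b} (hM : M.Triangular) (hN : N.Triangular) :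
    (M - N).Triangular := fun σ τ h => by
  rw [sub_apply, hM σ τ h, hN σ τ h, sub_zero]

protected theorem mul_assoc (M : GradedMat a b) (N : GradedMat b c) (K : GradedMat c e) :
    M * N * K = M * (N * K) := by
  ext σ ρ
  simp only [mul_apply, Preadditive.sum_comp, Preadditive.comp_sum, Category.assoc]
  exact Itv.sum_sum_comm ρ σ fun μ τ => M σ μ ≫ N μ τ ≫ K τ ρ

protected theorem one_mul {M : GradedMat a b} (hM : M.Triangular) :
    (1 : GradedMat a a) * M = M := by
  ext σ ρ
  by_cases hle : ρ ≤ σ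
  · rw [mul_apply, Fintype.sum_eq_single (Itv.top hle)]
    · rw [one_apply_self, Category.id_comp]
    · intro τ hτ
      rw [one_apply_of_ne fun h => hτ (Subtype.ext h), Limits.zero_comp]
  · exact (Itv.sum_eq_zero_of_not_le hle _).trans (hM σ ρ hle).symm

protected theorem mul_one {M : GradedMat a b} (hM : M.Triangular) :
    M * (1 : GradedMat b b) = M := by
  ext σ ρ
  by_cases hle : ρ ≤ σ
  · rw [mul_apply, Fintype.sum_eq_single (⟨ρ, le_rfl, hle⟩ : Itv ρ σ)]
    · rw [one_apply_self, Category.comp_id]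
    · intro τ hτ
      rw [one_apply_of_ne fun h => hτ (Subtype.ext h.symm), Limits.comp_zero]
  · exact (Itv.sum_eq_zero_of_not_le hle _).trans (hM σ ρ hle).symm

protected theorem mul_add (M : GradedMat a b) (N K : GradedMat b c) :
    M * (N + K) = M * N + M * K := by
  ext σ ρ
  simp only [mul_apply, add_apply, Preadditive.comp_add, Finset.sum_add_distrib]

protected theorem add_mul (M N : GradedMat a b) (K : GradedMat b c) :
    (M + N) * K = M * K + N * K := by
  ext σ ρ
  simp only [mul_apply, add_apply, Preadditive.add_comp, Finset.sum_add_distrib]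

protected theorem mul_sub (M : GradedMat a b) (N K : GradedMat b c) :
    M * (N - K) = M * N - M * K := by
  ext σ ρ
  simp only [mul_apply, sub_apply, Preadditive.comp_sub, Finset.sum_sub_distrib]

protected theorem zero_mul (M : GradedMat b c) : (0 : GradedMat a b) * M = 0 := by
  ext σ ρ
  simp only [mul_apply, zero_apply, Limits.zero_comp, Finset.sum_const_zero]

protected theorem mul_zero (M : GradedMat a b) : M * (0 : GradedMat b c) = 0 := by
  ext σ ρ
  simp only [mul_apply, zero_apply, Limits.comp_zero, Finset.sum_const_zero]

noncomputable def rightInv (U : GradedMat a a) : GradedMat a a := fun σ ρ =>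
  if h : ρ = σ then eqToHom (by rw [h])
  else -∑ τ : Itv ρ σ, if hτ : τ.1 = σ then 0 else U σ τ.1 ≫ rightInv U τ.1 ρ
termination_by σ ρ => Fintype.card (Itv ρ σ)
decreasing_by exact Itv.card_lt_card τ.2.1 (lt_of_le_of_ne τ.2.2 hτ)

theorem rightInv_apply_of_ne (U : GradedMat a a) {σ ρ : X} (h : ρ ≠ σ) :
    U.rightInv σ ρ = -∑ τ : Itv ρ σ, if τ.1 = σ then 0 else U σ τ.1 ≫ U.rightInv τ.1 ρ := by
  rw [rightInv, dif_neg h]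
  rfl

theorem mul_rightInv {U : GradedMat a a} (hU : ∀ σ, U σ σ = 𝟙 (a σ)) : U * U.rightInv = 1 := by
  ext σ ρ
  by_cases hle : ρ ≤ σ
  · rw [mul_apply, Itv.sum_eq_add_sum_ne_top hle, hU, Category.id_comp]
    by_cases h : ρ = σ
    · subst h
      have hsum : ∀ τ : Itv ρ ρ, τ.1 = ρ := fun τ => le_antisymm τ.2.2 τ.2.1
      simp only [hsum, if_true, Finset.sum_const_zero, add_zero, one_apply_self]
      rw [rightInv, dif_pos rfl, eqToHom_refl]
    · rw [rightInv_apply_of_ne U h, neg_add_cancel, one_apply_of_ne h]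
  · rw [triangular_mul _ _ σ ρ hle, one_apply_of_ne fun h => hle h.le]

theorem apply_eq_zero_of_mul_eq_zero {U : GradedMat a a} (hU : ∀ σ, U σ σ = 𝟙 (a σ))
    {M : GradedMat a b} (hM : M.Triangular) (h : U * M = 0) (σ ρ : X) : M σ ρ = 0 := by
  by_cases hle : ρ ≤ σ
  · have hσρ : (U * M) σ ρ = 0 := by rw [h, zero_apply]
    rw [mul_apply, Itv.sum_eq_add_sum_ne_top hle, hU, Category.id_comp] at hσρ
    rwa [Finset.sum_eq_zero, add_zero] at hσρ
    intro τ _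
    split_ifs with hτ
    · rfl
    · rw [apply_eq_zero_of_mul_eq_zero hU hM h τ.1 ρ, Limits.comp_zero]
  · exact hM σ ρ hle
termination_by Fintype.card (Itv ρ σ)
decreasing_by exact Itv.card_lt_card τ.2.1 (lt_of_le_of_ne τ.2.2 hτ)

theorem rightInv_mul_comm {U : GradedMat a a} {V : GradedMat b b} (hU : ∀ σ, U σ σ = 𝟙 (a σ))
    (hV : ∀ σ, V σ σ = 𝟙 (b σ)) {D : GradedMat a b} (hD : D.Triangular) (h : U * D = D * V) :
    U.rightInv * D = D * V.rightInv := by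
  have hcancel : U * (U.rightInv * D - D * V.rightInv) = 0 := by
    rw [GradedMat.mul_sub, ← GradedMat.mul_assoc, mul_rightInv hU, GradedMat.one_mul hD,
      ← GradedMat.mul_assoc, h, GradedMat.mul_assoc, mul_rightInv hV, GradedMat.mul_one hD,
      sub_self]
  ext σ ρ
  exact sub_eq_zero.mp (apply_eq_zero_of_mul_eq_zero hU
    ((triangular_mul _ _).sub (triangular_mul _ _)) hcancel σ ρ)

end GradedMat

namespace GCx

variable (C : GCx X A)

def dMat (i j : ℤ) : GradedMat (C.ob i) (C.ob j) := C.d i j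

theorem triangular_dMat (i j : ℤ) : (C.dMat i j).Triangular :=
  fun σ τ h => C.shape i j σ τ fun hc => h hc.1

theorem dMat_mul_dMat {i j k : ℤ} (hj : j = i - 1) (hk : k = j - 1) :
    C.dMat i j * C.dMat j k = 0 := by
  subst hj hk
  ext σ ρ
  exact C.dsq i σ ρ

end GCx

namespace LocalContraction

variable {C : GCx X A} (p : ∀ σ, LocalContraction C σ)

noncomputable def diagMat (i j : ℤ) : GradedMat (C.ob i) (C.ob j) :=
  fun σ τ => if h : τ = σ then (p σ).P i j ≫ eqToHom (by rw [h]) else 0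

theorem diagMat_apply_self (i j : ℤ) (σ : X) : diagMat p i j σ σ = (p σ).P i j := by
  simp [diagMat]

noncomputable def nullHomotopicMat (i : ℤ) : GradedMat (C.ob i) (C.ob i) :=
  C.dMat i (i - 1) * diagMat p (i - 1) i + diagMat p i (i + 1) * C.dMat (i + 1) i

theorem nullHomotopicMat_apply_self (i : ℤ) (σ : X) :
    nullHomotopicMat p i σ σ = 𝟙 (C.ob i σ) := by
  rw [nullHomotopicMat, GradedMat.add_apply, GradedMat.mul_apply, GradedMat.mul_apply,
    Itv.sum_self, Itv.sum_self, diagMat_apply_self, diagMat_apply_self]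
  exact (p σ).contr i

theorem nullHomotopicMat_mul_dMat {i j : ℤ} (hj : j = i - 1) :
    nullHomotopicMat p i * C.dMat i j = C.dMat i j * nullHomotopicMat p j := by
  subst hj
  have hi : i - 1 + 1 = i := by omega
  rw [nullHomotopicMat, nullHomotopicMat, hi, GradedMat.add_mul, GradedMat.mul_add,
    GradedMat.mul_assoc (diagMat p i (i + 1)), C.dMat_mul_dMat (by omega) rfl,
    GradedMat.mul_zero, add_zero, ← GradedMat.mul_assoc (C.dMat i (i - 1)),
    C.dMat_mul_dMat rfl rfl, GradedMat.zero_mul, zero_add, GradedMat.mul_assoc]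

theorem dMat_mul_add_mul_dMat (i : ℤ) :
    C.dMat i (i - 1) * (diagMat p (i - 1) i * (nullHomotopicMat p i).rightInv)
      + diagMat p i (i + 1) * (nullHomotopicMat p (i + 1)).rightInv * C.dMat (i + 1) i = 1 := by
  rw [GradedMat.mul_assoc (diagMat p i (i + 1)),
    GradedMat.rightInv_mul_comm (nullHomotopicMat_apply_self p (i + 1))
      (nullHomotopicMat_apply_self p i) (C.triangular_dMat _ _)
      (nullHomotopicMat_mul_dMat p (by omega)),
    ← GradedMat.mul_assoc, ← GradedMat.mul_assoc, ← GradedMat.add_mul]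
  exact GradedMat.mul_rightInv (nullHomotopicMat_apply_self p i)

end LocalContraction

noncomputable def GlobalContraction.ofLocal {C : GCx X A} (p : ∀ σ, LocalContraction C σ) :
    GlobalContraction C where
  P i j := (if j = i + 1 then
    LocalContraction.diagMat p i j * (LocalContraction.nullHomotopicMat p j).rightInv
    else 0 : GradedMat (C.ob i) (C.ob j))
  shape i j σ τ h := by
    split_ifs with hj
    · exact GradedMat.triangular_mul _ _ σ τ fun hle => h ⟨hle, hj⟩
    · rfl
  contr i σ ρ := by
    rw [if_pos (by omega : i = i - 1 + 1), if_pos rfl]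
    exact congrArg (fun M => M σ ρ) (LocalContraction.dMat_mul_add_mul_dMat p i)

def GlobalContraction.toLocal {C : GCx X A} (G : GlobalContraction C) (σ : X) :
    LocalContraction C σ where
  P i j := G.P i j σ σ
  shape i j h := G.shape i j σ σ fun hc => h hc.2
  contr i := by simpa [Itv.sum_self] using G.contr i σ σ

/-- a finite chain complex `C` in `A*(X)` is chain contractible in `A*(X)`
if and only if each local chain complex `C(σ)` is chain contractible in `A`. -/
theorem stmt4 (C : GCx X A) :
    Nonempty (GlobalContraction C) ↔ ∀ σ : X, Nonempty (LocalContraction C σ) :=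
  ⟨fun ⟨G⟩ σ => ⟨G.toLocal σ⟩, fun h => ⟨.ofLocal fun σ => (h σ).some⟩⟩
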